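/- arXiv:2306.13610 — 2 statements merged into one kernel-verified Lean document; each statement's English description precedes it below -/
import Mathlib

section
/- For every primary doctrine P : Cᵒᵖ → InfSL, the pure existential completion P^∃ : Cᵒᵖ → InfSL is a pure existential doctrine: for every product projection π the reindexing (P^∃)_π has a left adjoint, and these left adjoints satisfy the Beck–Chevalley condition and Frobenius reciprocity. -/
open CategoryTheory MonoidalCategory CartesianMonoidalCategory Limits

universe w v u

/-- A **primary doctrine**: a functor `P : Cᵒᵖ → InfSL` from the opposite of a category `C`
with (chosen) finite products to the category of inf-semilattices with top element,
presented concretely by its fibres and reindexing maps. -/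
structure PrimaryDoctrine (C : Type u) [Category.{v} C] [CartesianMonoidalCategory C] where
  Fib : C → Type w
  [instSemilatticeInf : ∀ A : C, SemilatticeInf (Fib A)]
  [instOrderTop : ∀ A : C, OrderTop (Fib A)]
  reindex : ∀ {A B : C}, (A ⟶ B) → Fib B → Fib A
  reindex_id : ∀ (A : C) (a : Fib A), reindex (𝟙 A) a = a
  reindex_comp : ∀ {A B D : C} (f : A ⟶ B) (g : B ⟶ D) (d : Fib D),
      reindex (f ≫ g) d = reindex f (reindex g d)
  reindex_inf : ∀ {A B : C} (f : A ⟶ B) (x y : Fib B),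
      reindex f (x ⊓ y) = reindex f x ⊓ reindex f y
  reindex_top : ∀ {A B : C} (f : A ⟶ B), reindex f (⊤ : Fib B) = ⊤

attribute [instance] PrimaryDoctrine.instSemilatticeInf PrimaryDoctrine.instOrderTop

namespace PrimaryDoctrine

variable {C : Type u} [Category.{v} C] [CartesianMonoidalCategory C]

theorem reindex_mono (P : PrimaryDoctrine.{w} C) {A B : C} (f : A ⟶ B) {x y : P.Fib B}
    (h : x ≤ y) : P.reindex f x ≤ P.reindex f y := by
  have hxy : x ⊓ y = x := inf_eq_left.mpr h
  calc P.reindex f x = P.reindex f (x ⊓ y) := by rw [hxy]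
    _ = P.reindex f x ⊓ P.reindex f y := P.reindex_inf f x y
    _ ≤ P.reindex f y := inf_le_right

end PrimaryDoctrine

/-- A **pure existential doctrine**: a primary doctrine together with left adjoints to
reindexing along the product projections, satisfying the Beck–Chevalley condition and
the Frobenius reciprocity condition. -/
structure PureExistentialDoctrine (C : Type u) [Category.{v} C] [CartesianMonoidalCategory C]
    extends PrimaryDoctrine.{w} C where
  ex : ∀ (A B : C), Fib (A ⊗ B) → Fib A
  ex_adj : ∀ (A B : C) (β : Fib (A ⊗ B)) (α : Fib A),
      ex A B β ≤ α ↔ β ≤ reindex (fst A B) α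
  ex_bcc : ∀ {A' A : C} (f : A' ⟶ A) (B : C) (β : Fib (A ⊗ B)),
      ex A' B (reindex (f ▷ B) β) = reindex f (ex A B β)
  ex_frob : ∀ (A B : C) (α : Fib A) (β : Fib (A ⊗ B)),
      ex A B (reindex (fst A B) α ⊓ β) = α ⊓ ex A B β

/-- The **elementary structure** on a primary doctrine: fibered equalities `δ_A ∈ P(A × A)`
providing the prescribed left adjoints to reindexing along diagonals. -/
structure ElementaryStructure {C : Type u} [Category.{v} C] [CartesianMonoidalCategory C]
    (P : PrimaryDoctrine.{w} C) where
  delta : ∀ A : C, P.Fib (A ⊗ A)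
  delta_adj : ∀ (A : C) (α : P.Fib A) (γ : P.Fib (A ⊗ A)),
      P.reindex (fst A A) α ⊓ delta A ≤ γ ↔ α ≤ P.reindex (lift (𝟙 A) (𝟙 A)) γ
  delta_adj₂ : ∀ (X A : C) (α : P.Fib (X ⊗ A)) (γ : P.Fib ((X ⊗ A) ⊗ A)),
      P.reindex (fst (X ⊗ A) A) α ⊓
        P.reindex (lift (fst (X ⊗ A) A ≫ snd X A) (snd (X ⊗ A) A)) (delta A) ≤ γ ↔
      α ≤ P.reindex (lift (𝟙 (X ⊗ A)) (snd X A)) γ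

namespace PureExistentialDoctrine

variable {C : Type u} [Category.{v} C] [CartesianMonoidalCategory C]

/-- An element `α ∈ P(A)` is a **pure existential splitting** if whenever `α = ∃_{π_A}(β)`
for a projection `π_A : A ⊗ B ⟶ A`, there is `h : A ⟶ B` with `α = P_{⟨id_A, h⟩}(β)`. -/
def IsSplitting (P : PureExistentialDoctrine.{w} C) {A : C} (α : P.Fib A) : Prop :=
  ∀ (B : C) (β : P.Fib (A ⊗ B)), α = P.ex A B β →
    ∃ h : A ⟶ B, α = P.reindex (lift (𝟙 A) h) β

/-- An element `α ∈ P(A)` is **pure existential free** if every reindexing of it is a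
pure existential splitting. -/
def IsFree (P : PureExistentialDoctrine.{w} C) {A : C} (α : P.Fib A) : Prop :=
  ∀ {B : C} (f : B ⟶ A), P.IsSplitting (P.reindex f α)

/-- The **Rule of Choice** for a pure existential doctrine. -/
def RuleOfChoice (P : PureExistentialDoctrine.{w} C) : Prop :=
  ∀ (A B : C) (β : P.Fib (A ⊗ B)), (⊤ : P.Fib A) ≤ P.ex A B β →
    ∃ h : A ⟶ B, (⊤ : P.Fib A) ≤ P.reindex (lift (𝟙 A) h) β

/-- `P` has **enough pure existential free elements**: every element is covered by a
pure existential free one. -/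
def HasEnoughFree (P : PureExistentialDoctrine.{w} C) : Prop :=
  ∀ (A : C) (α : P.Fib A), ∃ (B : C) (β : P.Fib (A ⊗ B)), P.IsFree β ∧ α = P.ex A B β

/-- `P` is **equipped with Hilbert's ε-operators**. -/
def HasHilbertEps (P : PureExistentialDoctrine.{w} C) : Prop :=
  ∀ (A B : C) (α : P.Fib (A ⊗ B)), ∃ e : A ⟶ B,
    P.ex A B α = P.reindex (lift (𝟙 A) e) α

end PureExistentialDoctrine
section ExistentialCompletion

variable {C : Type u} [Category.{v} C] [CartesianMonoidalCategory C]

/-- The carrier of the fibre over `A` of the **pure existential completion** of a primary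
doctrine `P`: pairs `(B, α ∈ P(A ⊗ B))`. -/
def ExtCarrier (P : PrimaryDoctrine.{w} C) (A : C) : Type _ :=
  Σ B : C, P.Fib (A ⊗ B)

/-- The preorder on the fibres of the pure existential completion:
`(B, α) ≤ (C, γ)` iff there is `w : A ⊗ B ⟶ C` with `α ≤ P_{⟨π_A, w⟩}(γ)`. -/
def extLe {P : PrimaryDoctrine.{w} C} {A : C} (x y : ExtCarrier P A) : Prop :=
  ∃ w : A ⊗ x.1 ⟶ y.1, x.2 ≤ P.reindex (lift (fst A x.1) w) y.2

/-- The equivalence relation induced by the preorder `extLe`. -/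
def extEquiv {P : PrimaryDoctrine.{w} C} {A : C} (x y : ExtCarrier P A) : Prop :=
  extLe x y ∧ extLe y x

/-- Reindexing in the pure existential completion:
along `f : A' ⟶ A` it sends `(D, γ)` to `(D, P_{⟨f ∘ π_{A'}, π_D⟩}(γ))`. -/
def extReindex {P : PrimaryDoctrine.{w} C} {A' A : C} (f : A' ⟶ A) (x : ExtCarrier P A) :
    ExtCarrier P A' :=
  ⟨x.1, P.reindex (lift (fst A' x.1 ≫ f) (snd A' x.1)) x.2⟩

/-- Binary meets in the fibres of the pure existential completion. -/
def extInf {P : PrimaryDoctrine.{w} C} {A : C} (x y : ExtCarrier P A) : ExtCarrier P A :=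
  ⟨x.1 ⊗ y.1,
    P.reindex (lift (fst A (x.1 ⊗ y.1)) (snd A (x.1 ⊗ y.1) ≫ fst x.1 y.1)) x.2 ⊓
    P.reindex (lift (fst A (x.1 ⊗ y.1)) (snd A (x.1 ⊗ y.1) ≫ snd x.1 y.1)) y.2⟩

/-- The top element of the fibres of the pure existential completion. -/
def extTop (P : PrimaryDoctrine.{w} C) (A : C) : ExtCarrier P A :=
  ⟨𝟙_ C, (⊤ : P.Fib (A ⊗ 𝟙_ C))⟩

/-- The left adjoints along projections in the pure existential completion. -/
def extEx {P : PrimaryDoctrine.{w} C} (A B : C) (x : ExtCarrier P (A ⊗ B)) :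
    ExtCarrier P A :=
  ⟨B ⊗ x.1, P.reindex (α_ A B x.1).inv x.2⟩

/-- `P` (a pure existential doctrine) **is the pure existential completion of the primary
doctrine `P'`**, i.e. `P` is isomorphic, as a doctrine over `C`, to `(P')^∃`:
there is a natural family of order-isomorphisms between the fibres of `P` and those of the
completion (the latter being the antisymmetrization of `ExtCarrier P'`). -/
structure IsExtCompletionOf (P : PureExistentialDoctrine.{w} C) (P' : PrimaryDoctrine.{w} C) where
  toFun : ∀ A : C, P.Fib A → ExtCarrier P' A
  invFun : ∀ A : C, ExtCarrier P' A → P.Fib A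
  toFun_mono : ∀ (A : C) {a b : P.Fib A}, a ≤ b → extLe (toFun A a) (toFun A b)
  invFun_mono : ∀ (A : C) {x y : ExtCarrier P' A}, extLe x y → invFun A x ≤ invFun A y
  left_inv : ∀ (A : C) (a : P.Fib A), invFun A (toFun A a) = a
  right_inv : ∀ (A : C) (x : ExtCarrier P' A), extEquiv (toFun A (invFun A x)) x
  natural : ∀ {A' A : C} (f : A' ⟶ A) (a : P.Fib A),
      extEquiv (toFun A' (P.reindex f a)) (extReindex f (toFun A a))

end ExistentialCompletion


section AuxProof

variable {C : Type u} [Category.{v} C] [CartesianMonoidalCategory C] {P : PrimaryDoctrine.{w} C}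

theorem rr (P : PrimaryDoctrine.{w} C) {A B D : C} (f : A ⟶ B) (g : B ⟶ D) (d : P.Fib D) :
    P.reindex f (P.reindex g d) = P.reindex (f ≫ g) d := (P.reindex_comp f g d).symm

theorem rcongr (P : PrimaryDoctrine.{w} C) {A B : C} {f g : A ⟶ B} (h : f = g) (d : P.Fib B) :
    P.reindex f d = P.reindex g d := by rw [h]

theorem extLe_refl' {A : C} (x : ExtCarrier P A) : extLe x x :=
  ⟨snd A x.1, by rw [lift_fst_snd, P.reindex_id]⟩

theorem extEquiv_of_eq {A : C} {x y : ExtCarrier P A} (h : x = y) : extEquiv x y := by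
  subst h; exact ⟨extLe_refl' x, extLe_refl' x⟩

theorem extEquiv_mk {A B : C} {α β : P.Fib (A ⊗ B)} (h : α = β) :
    extEquiv (P := P) (A := A) ⟨B, α⟩ ⟨B, β⟩ :=
  extEquiv_of_eq (congrArg (Sigma.mk B) h)

end AuxProof

set_option maxHeartbeats 1000000 in
/-- For every primary doctrine `P`, its pure existential completion
`P^∃` is a pure existential doctrine: the fibres (the carriers `ExtCarrier P A`, with the
preorder `extLe` whose antisymmetrization is the fibre poset `P^∃(A)`) are inf-semilattices
with top, the reindexing maps are functorial inf-top-preserving monotone maps, and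
reindexing along every product projection `π_A : A ⊗ B ⟶ A` has a left adjoint `∃_{π_A}`;
these left adjoints satisfy the Beck–Chevalley condition and Frobenius reciprocity. -/
theorem extCompletion_isPureExistential {C : Type u} [Category.{v} C]
    [CartesianMonoidalCategory C] (P : PrimaryDoctrine.{w} C) :
    -- `extLe` is a preorder on each fibre
    (∀ (A : C) (x : ExtCarrier P A), extLe x x) ∧
    (∀ (A : C) (x y z : ExtCarrier P A), extLe x y → extLe y z → extLe x z) ∧
    -- `extTop` is the top element and `extInf` is the binary meet
    (∀ (A : C) (x : ExtCarrier P A), extLe x (extTop P A)) ∧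
    (∀ (A : C) (x y : ExtCarrier P A),
      extLe (extInf x y) x ∧ extLe (extInf x y) y ∧
        ∀ z : ExtCarrier P A, extLe z x → extLe z y → extLe z (extInf x y)) ∧
    -- reindexing is monotone, functorial, and preserves the inf-semilattice structure
    (∀ {A' A : C} (f : A' ⟶ A) (x y : ExtCarrier P A),
      extLe x y → extLe (extReindex f x) (extReindex f y)) ∧
    (∀ (A : C) (x : ExtCarrier P A), extEquiv (extReindex (𝟙 A) x) x) ∧
    (∀ {A B D : C} (f : A ⟶ B) (g : B ⟶ D) (x : ExtCarrier P D),
      extEquiv (extReindex (f ≫ g) x) (extReindex f (extReindex g x))) ∧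
    (∀ {A' A : C} (f : A' ⟶ A) (x y : ExtCarrier P A),
      extEquiv (extReindex f (extInf x y)) (extInf (extReindex f x) (extReindex f y))) ∧
    (∀ {A' A : C} (f : A' ⟶ A), extEquiv (extReindex f (extTop P A)) (extTop P A')) ∧
    -- `extEx` is left adjoint to reindexing along the projection `fst A B`
    (∀ (A B : C) (x : ExtCarrier P (A ⊗ B)) (y : ExtCarrier P A),
      extLe (extEx A B x) y ↔ extLe x (extReindex (fst A B) y)) ∧
    -- Beck–Chevalley condition
    (∀ {A' A : C} (f : A' ⟶ A) (B : C) (x : ExtCarrier P (A ⊗ B)),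
      extEquiv (extEx A' B (extReindex (f ▷ B) x)) (extReindex f (extEx A B x))) ∧
    -- Frobenius reciprocity
    (∀ (A B : C) (y : ExtCarrier P A) (x : ExtCarrier P (A ⊗ B)),
      extEquiv (extEx A B (extInf (extReindex (fst A B) y) x)) (extInf y (extEx A B x))) := by
  refine ⟨?_, ?_, ?_, ?_, ?_, ?_, ?_, ?_, ?_, ?_, ?_, ?_⟩
  · -- reflexivity
    intro A x
    try dsimp only [extReindex, extInf, extTop, extEx] at *
    exact extLe_refl' x
  · -- transitivity
    rintro A ⟨B, α⟩ ⟨D, γ⟩ ⟨E, δ⟩ ⟨w₁, h₁⟩ ⟨w₂, h₂⟩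
    try dsimp only [extReindex, extInf, extTop, extEx] at *
    refine ⟨lift (fst A B) w₁ ≫ w₂, ?_⟩
    calc α ≤ P.reindex (lift (fst A B) w₁) γ := h₁
      _ ≤ P.reindex (lift (fst A B) w₁) (P.reindex (lift (fst A D) w₂) δ) :=
        P.reindex_mono _ h₂
      _ = P.reindex (lift (fst A B) (lift (fst A B) w₁ ≫ w₂)) δ := by
        rw [rr]; exact rcongr P (by ext <;> simp) δ
  · -- top
    rintro A ⟨B, α⟩
    try dsimp only [extReindex, extInf, extTop, extEx] at *
    exact ⟨toUnit _, by rw [P.reindex_top]; exact le_top⟩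
  · -- inf
    rintro A ⟨B, α⟩ ⟨D, β⟩
    try dsimp only [extReindex, extInf, extTop, extEx] at *
    refine ⟨⟨snd A (B ⊗ D) ≫ fst B D, inf_le_left⟩,
      ⟨snd A (B ⊗ D) ≫ snd B D, inf_le_right⟩, ?_⟩
    rintro ⟨E, ζ⟩ ⟨w₁, h₁⟩ ⟨w₂, h₂⟩
    try dsimp only [extReindex, extInf, extTop, extEx] at *
    refine ⟨lift w₁ w₂, ?_⟩
    rw [P.reindex_inf, rr, rr]
    exact le_inf (h₁.trans (le_of_eq (rcongr P (by ext <;> simp) α)))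
      (h₂.trans (le_of_eq (rcongr P (by ext <;> simp) β)))
  · -- reindex monotone
    rintro A' A f ⟨B, α⟩ ⟨D, γ⟩ ⟨w, hw⟩
    try dsimp only [extReindex, extInf, extTop, extEx] at *
    refine ⟨lift (fst A' B ≫ f) (snd A' B) ≫ w, ?_⟩
    calc P.reindex (lift (fst A' B ≫ f) (snd A' B)) α
        ≤ P.reindex (lift (fst A' B ≫ f) (snd A' B)) (P.reindex (lift (fst A B) w) γ) :=
          P.reindex_mono _ hw
      _ = _ := by rw [rr, rr]; exact rcongr P (by ext <;> simp) γ
  · -- reindex id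
    rintro A ⟨B, α⟩
    try dsimp only [extReindex, extInf, extTop, extEx] at *
    refine extEquiv_mk ?_
    rw [rcongr P (show lift (fst A B ≫ 𝟙 A) (snd A B) = 𝟙 (A ⊗ B) by ext <;> simp) α,
      P.reindex_id]
  · -- reindex comp
    rintro A B D f g ⟨E, δ⟩
    try dsimp only [extReindex, extInf, extTop, extEx] at *
    refine extEquiv_mk ?_
    rw [rr]; exact rcongr P (by ext <;> simp) δ
  · -- reindex inf
    rintro A' A f ⟨B, α⟩ ⟨D, β⟩
    try dsimp only [extReindex, extInf, extTop, extEx] at *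
    refine extEquiv_mk ?_
    rw [P.reindex_inf, rr, rr, rr, rr]
    congr 1
    · exact rcongr P (by ext <;> simp) α
    · exact rcongr P (by ext <;> simp) β
  · -- reindex top
    intro A' A f
    try dsimp only [extReindex, extInf, extTop, extEx] at *
    refine extEquiv_mk ?_
    exact P.reindex_top _
  · -- adjunction
    rintro A B ⟨D, ξ⟩ ⟨E, η⟩
    try dsimp only [extReindex, extInf, extTop, extEx] at *
    constructor
    · rintro ⟨w, hw⟩
      refine ⟨(α_ A B D).hom ≫ w, ?_⟩
      have h := P.reindex_mono (α_ A B D).hom hw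
      rw [rr, rr, Iso.hom_inv_id, P.reindex_id] at h
      refine h.trans (le_of_eq ?_)
      rw [rr]; exact rcongr P (by ext <;> simp) η
    · rintro ⟨w, hw⟩
      refine ⟨(α_ A B D).inv ≫ w, ?_⟩
      have h := P.reindex_mono (α_ A B D).inv hw
      rw [rr, rr] at h
      refine h.trans (le_of_eq ?_)
      exact rcongr P (by ext <;> simp) η
  · -- Beck–Chevalley
    rintro A' A f B ⟨D, ξ⟩
    try dsimp only [extReindex, extInf, extTop, extEx] at *
    refine extEquiv_mk ?_
    rw [rr, rr]
    exact rcongr P (by ext <;> simp) ξ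
  · -- Frobenius
    rintro A B ⟨E, η⟩ ⟨D, ξ⟩
    try dsimp only [extReindex, extInf, extTop, extEx] at *
    constructor
    · refine ⟨lift (snd A (B ⊗ (E ⊗ D)) ≫ snd B (E ⊗ D) ≫ fst E D)
        (lift (snd A (B ⊗ (E ⊗ D)) ≫ fst B (E ⊗ D))
          (snd A (B ⊗ (E ⊗ D)) ≫ snd B (E ⊗ D) ≫ snd E D)), ?_⟩
      simp only [extEx, extInf, extReindex, P.reindex_inf, rr]
      refine le_inf (inf_le_left.trans (le_of_eq (rcongr P ?_ η)))
        (inf_le_right.trans (le_of_eq (rcongr P ?_ ξ))) <;> ext <;> simp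
    · refine ⟨lift (snd A (E ⊗ (B ⊗ D)) ≫ snd E (B ⊗ D) ≫ fst B D)
        (lift (snd A (E ⊗ (B ⊗ D)) ≫ fst E (B ⊗ D))
          (snd A (E ⊗ (B ⊗ D)) ≫ snd E (B ⊗ D) ≫ snd B D)), ?_⟩
      simp only [extEx, extInf, extReindex, P.reindex_inf, rr]
      refine le_inf (inf_le_left.trans (le_of_eq (rcongr P ?_ η)))
        (inf_le_right.trans (le_of_eq (rcongr P ?_ ξ))) <;> ext <;> simp
end

section
/- Let P : Cᵒᵖ → InfSL be a pure existential doctrine and P' a full subdoctrine of P. Then: (i) if P is the pure existential completion of the primary doctrine P', then P' is a pure existential cover of P; (ii) if P' is a pure existential cover of P, then the pure existential free elements of P are exactly the elements of P'; in particular a pure existential cover, if it exists, is unique. -/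
open CategoryTheory MonoidalCategory CartesianMonoidalCategory Limits

universe w v u

/-- A **full subdoctrine** of a primary doctrine: a choice of sub-inf-semilattices of the
fibres, closed under reindexing. -/
structure Subdoctrine {C : Type u} [Category.{v} C] [CartesianMonoidalCategory C]
    (P : PrimaryDoctrine.{w} C) where
  mem : ∀ A : C, Set (P.Fib A)
  top_mem : ∀ A : C, (⊤ : P.Fib A) ∈ mem A
  inf_mem : ∀ (A : C) {a b : P.Fib A}, a ∈ mem A → b ∈ mem A → a ⊓ b ∈ mem A
  reindex_mem : ∀ {A B : C} (f : A ⟶ B) {b : P.Fib B}, b ∈ mem B → P.reindex f b ∈ mem A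

namespace Subdoctrine

variable {C : Type u} [Category.{v} C] [CartesianMonoidalCategory C]

/-- The primary doctrine determined by a full subdoctrine. -/
def toPrimary {P : PrimaryDoctrine.{w} C} (S : Subdoctrine P) : PrimaryDoctrine.{w} C where
  Fib A := {a : P.Fib A // a ∈ S.mem A}
  instSemilatticeInf A :=
    { (inferInstance : PartialOrder {a : P.Fib A // a ∈ S.mem A}) with
      inf := fun a b => ⟨a.1 ⊓ b.1, S.inf_mem A a.2 b.2⟩
      inf_le_left := fun _ _ => (inf_le_left : _ ⊓ _ ≤ _)
      inf_le_right := fun _ _ => (inf_le_right : _ ⊓ _ ≤ _)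
      le_inf := fun _ _ _ h h' => (le_inf h h' : _ ≤ _ ⊓ _) }
  instOrderTop A :=
    { top := ⟨⊤, S.top_mem A⟩
      le_top := fun a => (le_top : a.1 ≤ ⊤) }
  reindex f b := ⟨P.reindex f b.1, S.reindex_mem f b.2⟩
  reindex_id A a := Subtype.ext (P.reindex_id A a.1)
  reindex_comp f g d := Subtype.ext (P.reindex_comp f g d.1)
  reindex_inf f x y := Subtype.ext (P.reindex_inf f x.1 y.1)
  reindex_top f := Subtype.ext (P.reindex_top f)

variable {P : PureExistentialDoctrine.{w} C}

/-- `α` is a **pure existential splitting of `P` relative to the subdoctrine `S`**: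
the splitting property where the covering element is required to lie in `S`. -/
def IsRelSplitting (S : Subdoctrine P.toPrimaryDoctrine) {A : C} (α : P.Fib A) : Prop :=
  ∀ (B : C) (β : P.Fib (A ⊗ B)), β ∈ S.mem (A ⊗ B) → α = P.ex A B β →
    ∃ h : A ⟶ B, α = P.reindex (lift (𝟙 A) h) β

/-- Every element of `P` is covered by an element of the subdoctrine `S`. -/
def CoversAll (S : Subdoctrine P.toPrimaryDoctrine) : Prop :=
  ∀ (A : C) (α : P.Fib A), ∃ (B : C) (β : P.Fib (A ⊗ B)),
    β ∈ S.mem (A ⊗ B) ∧ α = P.ex A B β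

/-- `S` is a **pure existential cover** of `P`. -/
def IsCover (S : Subdoctrine P.toPrimaryDoctrine) : Prop :=
  (∀ (A : C) (α : P.Fib A), α ∈ S.mem A → P.IsSplitting α) ∧ S.CoversAll

/-- `S` is a **pure existential relative cover** of `P`. -/
def IsRelCover (S : Subdoctrine P.toPrimaryDoctrine) : Prop :=
  (∀ (A : C) (α : P.Fib A), α ∈ S.mem A → S.IsRelSplitting α) ∧ S.CoversAll

end Subdoctrine
section ExtSub

variable {C : Type u} [Category.{v} C] [CartesianMonoidalCategory C]

/-- `P` is the pure existential completion of its full subdoctrine `S`: an isomorphism of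
doctrines `P ≅ (S)^∃` which is compatible with the canonical embedding of `S` into its
pure existential completion. -/
structure IsExtCompletionOfSub (P : PureExistentialDoctrine.{w} C)
    (S : Subdoctrine P.toPrimaryDoctrine) extends IsExtCompletionOf P S.toPrimary where
  compat : ∀ (A : C) (α : P.Fib A) (hα : α ∈ S.mem A),
      extEquiv (toFun A α)
        ⟨𝟙_ C, S.toPrimary.reindex (fst A (𝟙_ C)) ⟨α, hα⟩⟩

end ExtSub

section Aux

variable {C : Type u} [Category.{v} C] [CartesianMonoidalCategory C]

namespace PrimaryDoctrine

variable {Q : PrimaryDoctrine.{w} C}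

theorem extLe_refl {A : C} (x : ExtCarrier Q A) : extLe x x := by
  refine ⟨snd _ _, le_of_eq ?_⟩
  rw [lift_fst_snd, Q.reindex_id]

theorem extLe_trans {A : C} {x y z : ExtCarrier Q A} (h1 : extLe x y) (h2 : extLe y z) :
    extLe x z := by
  obtain ⟨w1, h1⟩ := h1
  obtain ⟨w2, h2⟩ := h2
  refine ⟨lift (fst A x.1) w1 ≫ w2, ?_⟩
  have h3 := Q.reindex_mono (lift (fst A x.1) w1) h2
  rw [← Q.reindex_comp] at h3
  have hmap : lift (fst A x.1) w1 ≫ lift (fst A y.1) w2 =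
      lift (fst A x.1) (lift (fst A x.1) w1 ≫ w2) := by
    ext <;> simp
  rw [hmap] at h3
  exact le_trans h1 h3

theorem extLe_reindex {A' A : C} (f : A' ⟶ A) {x y : ExtCarrier Q A} (h : extLe x y) :
    extLe (extReindex f x) (extReindex f y) := by
  obtain ⟨w, hw⟩ := h
  refine ⟨lift (fst A' x.1 ≫ f) (snd A' x.1) ≫ w, ?_⟩
  show Q.reindex (lift (fst A' x.1 ≫ f) (snd A' x.1)) x.2 ≤
    Q.reindex (lift (fst A' x.1) (lift (fst A' x.1 ≫ f) (snd A' x.1) ≫ w))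
      (Q.reindex (lift (fst A' y.1 ≫ f) (snd A' y.1)) y.2)
  have h2 := Q.reindex_mono (lift (fst A' x.1 ≫ f) (snd A' x.1)) hw
  rw [← Q.reindex_comp] at h2
  rw [← Q.reindex_comp]
  have hmap : lift (fst A' x.1) (lift (fst A' x.1 ≫ f) (snd A' x.1) ≫ w) ≫
      lift (fst A' y.1 ≫ f) (snd A' y.1) =
      lift (fst A' x.1 ≫ f) (snd A' x.1) ≫ lift (fst A x.1) w := by
    ext <;> simp
  rw [hmap]
  exact h2

/-- The unit of the existential adjunction, at the level of `ExtCarrier`. -/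
theorem ext_unit {A B : C} (u : Q.Fib (A ⊗ B)) :
    extLe (⟨𝟙_ C, Q.reindex (fst (A ⊗ B) (𝟙_ C)) u⟩ : ExtCarrier Q (A ⊗ B))
      (extReindex (fst A B) (⟨B, u⟩ : ExtCarrier Q A)) := by
  refine ⟨fst (A ⊗ B) (𝟙_ C) ≫ snd A B, ?_⟩
  show Q.reindex (fst (A ⊗ B) (𝟙_ C)) u ≤
    Q.reindex (lift (fst (A ⊗ B) (𝟙_ C)) (fst (A ⊗ B) (𝟙_ C) ≫ snd A B))
      (Q.reindex (lift (fst (A ⊗ B) B ≫ fst A B) (snd (A ⊗ B) B)) u)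
  rw [← Q.reindex_comp]
  have hmap : lift (fst (A ⊗ B) (𝟙_ C)) (fst (A ⊗ B) (𝟙_ C) ≫ snd A B) ≫
      lift (fst (A ⊗ B) B ≫ fst A B) (snd (A ⊗ B) B) = fst (A ⊗ B) (𝟙_ C) := by
    ext <;> simp
  rw [hmap]

/-- Extraction of the counit property at the level of `ExtCarrier`. -/
theorem ext_back {A B E : C} (u : Q.Fib (A ⊗ B)) (ε : Q.Fib (A ⊗ E))
    (h : extLe (⟨𝟙_ C, Q.reindex (fst (A ⊗ B) (𝟙_ C)) u⟩ : ExtCarrier Q (A ⊗ B))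
      (⟨E, Q.reindex (lift (fst (A ⊗ B) E ≫ fst A B) (snd (A ⊗ B) E)) ε⟩ :
        ExtCarrier Q (A ⊗ B))) :
    extLe (⟨B, u⟩ : ExtCarrier Q A) (⟨E, ε⟩ : ExtCarrier Q A) := by
  obtain ⟨w, hw⟩ := h
  have hw' : Q.reindex (fst (A ⊗ B) (𝟙_ C)) u ≤
      Q.reindex (lift (fst (A ⊗ B) (𝟙_ C)) w)
        (Q.reindex (lift (fst (A ⊗ B) E ≫ fst A B) (snd (A ⊗ B) E)) ε) := hw
  refine ⟨lift (𝟙 (A ⊗ B)) (toUnit (A ⊗ B)) ≫ w, ?_⟩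
  show u ≤ Q.reindex (lift (fst A B) (lift (𝟙 (A ⊗ B)) (toUnit (A ⊗ B)) ≫ w)) ε
  have h2 := Q.reindex_mono (lift (𝟙 (A ⊗ B)) (toUnit (A ⊗ B))) hw'
  rw [← Q.reindex_comp, ← Q.reindex_comp, ← Q.reindex_comp] at h2
  have hj : lift (𝟙 (A ⊗ B)) (toUnit (A ⊗ B)) ≫ fst (A ⊗ B) (𝟙_ C) = 𝟙 (A ⊗ B) := by simp
  rw [hj, Q.reindex_id] at h2
  have hmap : (lift (𝟙 (A ⊗ B)) (toUnit (A ⊗ B)) ≫ lift (fst (A ⊗ B) (𝟙_ C)) w) ≫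
      lift (fst (A ⊗ B) E ≫ fst A B) (snd (A ⊗ B) E) =
      lift (fst A B) (lift (𝟙 (A ⊗ B)) (toUnit (A ⊗ B)) ≫ w) := by
    ext <;> simp
  rw [hmap] at h2
  exact h2

end PrimaryDoctrine

namespace PureExistentialDoctrine

variable {P : PureExistentialDoctrine.{w} C}

theorem counit (A B : C) (β : P.Fib (A ⊗ B)) :
    β ≤ P.reindex (fst A B) (P.ex A B β) :=
  (P.ex_adj A B β (P.ex A B β)).mp le_rfl

theorem reindex_lift_le_ex {A B : C} (h : A ⟶ B) (β : P.Fib (A ⊗ B)) :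
    P.reindex (lift (𝟙 A) h) β ≤ P.ex A B β := by
  have h2 := P.toPrimaryDoctrine.reindex_mono (lift (𝟙 A) h) (counit A B β)
  rwa [← P.reindex_comp, lift_fst, P.reindex_id] at h2

theorem ex_ex (A B D : C) (δ : P.Fib ((A ⊗ B) ⊗ D)) :
    P.ex A B (P.ex (A ⊗ B) D δ) = P.ex A (B ⊗ D) (P.reindex (α_ A B D).inv δ) := by
  refine le_antisymm ?_ ?_
  · rw [P.ex_adj, P.ex_adj]
    have h1 := P.toPrimaryDoctrine.reindex_mono (α_ A B D).hom
      (counit A (B ⊗ D) (P.reindex (α_ A B D).inv δ))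
    rw [← P.reindex_comp, ← P.reindex_comp, Iso.hom_inv_id, P.reindex_id,
      associator_hom_fst, P.reindex_comp] at h1
    exact h1
  · rw [P.ex_adj]
    have h1 := P.toPrimaryDoctrine.reindex_mono (fst (A ⊗ B) D)
      (counit A B (P.ex (A ⊗ B) D δ))
    have h2 := le_trans (counit (A ⊗ B) D δ) h1
    rw [← P.reindex_comp] at h2
    have h3 := P.toPrimaryDoctrine.reindex_mono (α_ A B D).inv h2
    rw [← P.reindex_comp, (show (α_ A B D).inv ≫ fst (A ⊗ B) D ≫ fst A B = fst A (B ⊗ D) by simp)] at h3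
    exact h3

end PureExistentialDoctrine

namespace IsExtCompletionOfSub

open PrimaryDoctrine PureExistentialDoctrine

variable {P : PureExistentialDoctrine.{w} C} {S : Subdoctrine P.toPrimaryDoctrine}

theorem le_iff (e : IsExtCompletionOfSub P S) {A : C} (a b : P.Fib A) :
    a ≤ b ↔ extLe (e.toFun A a) (e.toFun A b) := by
  refine ⟨e.toFun_mono A, fun h => ?_⟩
  have h2 := e.invFun_mono A h
  rwa [e.left_inv, e.left_inv] at h2

theorem coversAll_aux (e : IsExtCompletionOfSub P S) {A : C} (α : P.Fib A) (B : C)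
    (u : S.toPrimary.Fib (A ⊗ B)) (hx : e.toFun A α = ⟨B, u⟩) :
    α = P.ex A B u.1 := by
  refine le_antisymm ?_ ?_
  · -- α ≤ P.ex A B u.1
    have hcu := (e.le_iff u.1 (P.reindex (fst A B) (P.ex A B u.1))).mp (counit A B u.1)
    have h1 : extLe (⟨𝟙_ C, S.toPrimary.reindex (fst (A ⊗ B) (𝟙_ C)) u⟩ :
        ExtCarrier S.toPrimary (A ⊗ B))
        (extReindex (fst A B) (e.toFun A (P.ex A B u.1))) :=
      extLe_trans (e.compat _ u.1 u.2).2 (extLe_trans hcu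
        (e.natural (fst A B) (P.ex A B u.1)).1)
    have h2 := ext_back (Q := S.toPrimary) u (e.toFun A (P.ex A B u.1)).2 h1
    rw [← hx] at h2
    exact (e.le_iff α (P.ex A B u.1)).mpr h2
  · -- P.ex A B u.1 ≤ α
    rw [P.ex_adj]
    refine (e.le_iff u.1 (P.reindex (fst A B) α)).mpr ?_
    refine extLe_trans (e.compat _ u.1 u.2).1 (extLe_trans ?_ (e.natural (fst A B) α).2)
    rw [hx]
    exact ext_unit (Q := S.toPrimary) u

theorem coversAll (e : IsExtCompletionOfSub P S) : S.CoversAll := by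
  intro A α
  exact ⟨(e.toFun A α).1, (e.toFun A α).2.1, (e.toFun A α).2.2,
    e.coversAll_aux α (e.toFun A α).1 (e.toFun A α).2 rfl⟩

theorem relSplit (e : IsExtCompletionOfSub P S) {A X : C} (α : P.Fib A)
    (hα : α ∈ S.mem A) (γ : P.Fib (A ⊗ X)) (hγ : γ ∈ S.mem (A ⊗ X))
    (hex : α = P.ex A X γ) :
    ∃ k : A ⟶ X, α = P.reindex (lift (𝟙 A) k) γ := by
  have key : extLe (⟨𝟙_ C, S.toPrimary.reindex (fst A (𝟙_ C)) ⟨α, hα⟩⟩ :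
      ExtCarrier S.toPrimary A) ⟨X, ⟨γ, hγ⟩⟩ := by
    refine extLe_trans (e.compat A α hα).2 ?_
    have hle : α ≤ e.invFun A ⟨X, ⟨γ, hγ⟩⟩ := by
      rw [hex, P.ex_adj]
      refine (e.le_iff γ _).mpr ?_
      refine extLe_trans (e.compat _ γ hγ).1 (extLe_trans
        (ext_unit (Q := S.toPrimary) ⟨γ, hγ⟩) (extLe_trans
        (extLe_reindex (fst A X) (e.right_inv A ⟨X, ⟨γ, hγ⟩⟩).2)
        (e.natural (fst A X) (e.invFun A ⟨X, ⟨γ, hγ⟩⟩)).2))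
    exact extLe_trans (e.toFun_mono A hle) (e.right_inv A ⟨X, ⟨γ, hγ⟩⟩).1
  obtain ⟨w, hw⟩ := key
  have hw1 : P.reindex (fst A (𝟙_ C)) α ≤ P.reindex (lift (fst A (𝟙_ C)) w) γ := hw
  refine ⟨lift (𝟙 A) (toUnit A) ≫ w, le_antisymm ?_ ?_⟩
  · have h2 := P.toPrimaryDoctrine.reindex_mono (lift (𝟙 A) (toUnit A)) hw1
    have hj : lift (𝟙 A) (toUnit A) ≫ fst A (𝟙_ C) = 𝟙 A := by simp
    rw [← P.reindex_comp, ← P.reindex_comp, hj, P.reindex_id] at h2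
    have hmap : lift (𝟙 A) (toUnit A) ≫ lift (fst A (𝟙_ C)) w =
        lift (𝟙 A) (lift (𝟙 A) (toUnit A) ≫ w) := by
      ext <;> simp
    rw [hmap] at h2
    exact h2
  · rw [hex]
    exact reindex_lift_le_ex _ γ

theorem splits (e : IsExtCompletionOfSub P S) (A : C) (α : P.Fib A)
    (hα : α ∈ S.mem A) : P.IsSplitting α := by
  intro B β hβ
  obtain ⟨D, δ, hδmem, hδ⟩ := e.coversAll (A ⊗ B) β
  have hγmem : P.reindex (α_ A B D).inv δ ∈ S.mem (A ⊗ (B ⊗ D)) :=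
    S.reindex_mem _ hδmem
  have hexγ : α = P.ex A (B ⊗ D) (P.reindex (α_ A B D).inv δ) := by
    rw [hβ, hδ, ex_ex]
  obtain ⟨k, hk⟩ := e.relSplit α hα _ hγmem hexγ
  refine ⟨k ≫ fst B D, le_antisymm ?_ ?_⟩
  · have hcu : δ ≤ P.reindex (fst (A ⊗ B) D) β := by
      rw [hδ]; exact counit _ _ δ
    have hmap : (lift (𝟙 A) k ≫ (α_ A B D).inv) ≫ fst (A ⊗ B) D =
        lift (𝟙 A) (k ≫ fst B D) := by
      ext <;> simp
    calc α = P.reindex (lift (𝟙 A) k ≫ (α_ A B D).inv) δ := by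
          rw [hk, P.reindex_comp]
      _ ≤ P.reindex (lift (𝟙 A) k ≫ (α_ A B D).inv) (P.reindex (fst (A ⊗ B) D) β) :=
          P.toPrimaryDoctrine.reindex_mono _ hcu
      _ = P.reindex ((lift (𝟙 A) k ≫ (α_ A B D).inv) ≫ fst (A ⊗ B) D) β :=
          (P.reindex_comp _ _ _).symm
      _ = P.reindex (lift (𝟙 A) (k ≫ fst B D)) β := by rw [hmap]
  · rw [hβ]
    exact reindex_lift_le_ex _ β

theorem isCover (e : IsExtCompletionOfSub P S) : S.IsCover :=
  ⟨e.splits, e.coversAll⟩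

end IsExtCompletionOfSub

end Aux

/-- Let `P` be a pure existential doctrine and `P'` a full subdoctrine of
`P`. Then: (i) if `P` is the pure existential completion of the primary doctrine `P'`,
then `P'` is a pure existential cover of `P`; (ii) if `P'` is a pure existential cover of
`P`, then the pure existential free elements of `P` are exactly the elements of `P'`;
in particular, a pure existential cover, if it exists, is unique. -/
theorem cover_of_extCompletion_and_uniqueness {C : Type u} [Category.{v} C]
    [CartesianMonoidalCategory C] {P : PureExistentialDoctrine.{w} C}
    (S : Subdoctrine P.toPrimaryDoctrine) :
    (Nonempty (IsExtCompletionOfSub P S) → S.IsCover) ∧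
    (S.IsCover → ∀ (A : C) (α : P.Fib A), P.IsFree α ↔ α ∈ S.mem A) ∧
    (∀ S' : Subdoctrine P.toPrimaryDoctrine, S.IsCover → S'.IsCover → S = S') := by
  have part2 : ∀ S0 : Subdoctrine P.toPrimaryDoctrine, S0.IsCover →
      ∀ (A : C) (α : P.Fib A), P.IsFree α ↔ α ∈ S0.mem A := by
    intro S0 hS0 A α
    constructor
    · intro hF
      obtain ⟨B, β, hmem, hβ⟩ := hS0.2 A α
      have hsp : P.IsSplitting α := by
        have h1 := hF (𝟙 A)
        rwa [P.reindex_id] at h1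
      obtain ⟨h, hh⟩ := hsp B β hβ
      rw [hh]
      exact S0.reindex_mem _ hmem
    · intro hα B f
      exact hS0.1 B _ (S0.reindex_mem f hα)
  refine ⟨?_, fun h A α => part2 S h A α, ?_⟩
  · rintro ⟨e⟩
    exact e.isCover
  · intro S' hS hS'
    have hmem : S.mem = S'.mem := by
      funext A
      ext α
      rw [← part2 S hS A α, part2 S' hS' A α]
    cases S
    cases S'
    cases hmem
    rfl
end
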